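/- Let ρ : g → Diff(ℂ((z))) be an injective representation (g one of sl(2), Witt_>, Witt_<, Witt with support containing 0 and 1) with ord(ρ(L_0)) = 1, and let a_i denote the symbol of ρ(L_i). If D ∈ Diff(ℂ((z))) commutes with ρ(L_i) for all L_i ∈ g, and the symbols satisfy a_i = h^{i+n_i}(−h′)^{−n_i} for some h with h′ ≠ 0, then D is a constant (an element of ℂ ⊂ Diff⁰). -/

import Mathlib

/-! The principal symbol of `⁅ξ ∂ᵏ, a ∂ᵖ⁆` in order `k + p - 1` is `k ξ a′ - p a ξ′`. If `D` has
order `k` and symbol `ξ` and commutes with `ρ(L₀)` (symbol `a = h (-h′)⁻¹`, order one) and with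
`ρ(L₁)` (symbol `h aⁿ`, order `n`), then `k ξ a′ = a ξ′` and `k ξ (h aⁿ)′ = n h aⁿ ξ′`; eliminating
`ξ′` leaves `k ξ h′ aⁿ⁺¹ = 0`. Hence `k = 0`, and then `a ξ′ = 0` makes `ξ` a constant. -/

set_option synthInstance.maxHeartbeats 1000000
set_option maxHeartbeats 1000000

noncomputable section

/-- The derivative `∂ = d/dz` on `ℂ((z))`, as a `ℂ`-linear endomorphism. -/
def Dz : Module.End ℂ (LaurentSeries ℂ) := LaurentSeries.derivative ℂ

/-- Multiplication by a Laurent series `g`, as a `ℂ`-linear endomorphism of `ℂ((z))`. -/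
def mz (g : LaurentSeries ℂ) : Module.End ℂ (LaurentSeries ℂ) where
  toFun f := g * f
  map_add' := mul_add g
  map_smul' c f := by
    show g * (c • f) = c • (g * f)
    rw [← HahnSeries.single_zero_mul_eq_smul, ← HahnSeries.single_zero_mul_eq_smul, mul_left_comm]

/-- `P` is a differential operator on `ℂ((z))` of order `≤ k`: `P = Σ_{j=0}^{k} ξ_j ∂^j`. -/
def DiffOrderLE (P : Module.End ℂ (LaurentSeries ℂ)) (k : ℕ) : Prop :=
  ∃ ξ : ℕ → LaurentSeries ℂ, P = ∑ j ∈ Finset.range (k + 1), mz (ξ j) * Dz ^ j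

/-- `P` is a differential operator on `ℂ((z))` of order `< k` (for `k = 0` this means `P = 0`). -/
def DiffOrderLT (P : Module.End ℂ (LaurentSeries ℂ)) (k : ℕ) : Prop :=
  ∃ ξ : ℕ → LaurentSeries ℂ, P = ∑ j ∈ Finset.range k, mz (ξ j) * Dz ^ j

/-- `P` is a differential operator on `ℂ((z))` of order exactly `k`. -/
def HasOrder (P : Module.End ℂ (LaurentSeries ℂ)) (k : ℕ) : Prop :=
  DiffOrderLE P k ∧ ¬ DiffOrderLT P k

open scoped LaurentSeries
open Module

lemma Dz_coeff (f : ℂ⸨X⸩) (n : ℤ) : (Dz f).coeff n = (n + 1) * f.coeff (n + 1) := by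
  simp [Dz]

lemma coeff_single_one_mul_Dz (f : ℂ⸨X⸩) (n : ℤ) :
    (HahnSeries.single 1 1 * Dz f).coeff n = n * f.coeff n := by
  have := HahnSeries.coeff_single_mul_add (r := (1 : ℂ)) (x := Dz f) (a := n - 1) (b := 1)
  rw [sub_add_cancel] at this
  rw [this, one_mul, Dz_coeff, sub_add_cancel, Int.cast_sub, Int.cast_one, sub_add_cancel]

lemma support_single_one_mul_Dz_subset (f : ℂ⸨X⸩) :
    (HahnSeries.single 1 1 * Dz f).support ⊆ f.support := fun n hn ↦
  right_ne_zero_of_mul (by rwa [HahnSeries.mem_support, coeff_single_one_mul_Dz] at hn)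

-- The Euler operator `z ∂` multiplies the `n`-th coefficient by `n`, and `n = i + j` on the
-- antidiagonal of a product.
lemma Dz_mul (f g : ℂ⸨X⸩) : Dz (f * g) = Dz f * g + f * Dz g := by
  refine mul_left_cancel₀ (HahnSeries.single_ne_zero (a := (1 : ℤ)) (one_ne_zero' ℂ)) ?_
  rw [mul_add, ← mul_assoc, mul_left_comm]
  ext n
  rw [HahnSeries.coeff_add, coeff_single_one_mul_Dz,
    HahnSeries.coeff_mul_left' f.isPWO_support (support_single_one_mul_Dz_subset f),
    HahnSeries.coeff_mul_right' g.isPWO_support (support_single_one_mul_Dz_subset g),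
    HahnSeries.coeff_mul, Finset.mul_sum, ← Finset.sum_add_distrib]
  refine Finset.sum_congr rfl fun ij hij ↦ ?_
  rw [coeff_single_one_mul_Dz, coeff_single_one_mul_Dz, ← (Finset.mem_antidiagonal.1 hij).2.2]
  push_cast
  ring

lemma Dz_C (c : ℂ) : Dz (HahnSeries.C c) = 0 := by
  simp [Dz, HahnSeries.C_apply]

lemma Dz_natCast_mul (m : ℕ) (f : ℂ⸨X⸩) : Dz (m * f) = m * Dz f := by
  rw [Dz_mul, ← map_natCast HahnSeries.C, Dz_C, zero_mul, zero_add]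

lemma Dz_single_one_one : Dz (HahnSeries.single 1 1) = 1 := by
  simp [Dz]

lemma mul_Dz_pow (a : ℂ⸨X⸩) (n : ℕ) : a * Dz (a ^ n) = n * a ^ n * Dz a := by
  induction n with
  | zero => rw [pow_zero, ← map_one HahnSeries.C, Dz_C]; simp
  | succ n ih =>
    rw [pow_succ, Dz_mul]
    push_cast
    linear_combination a * ih

lemma exists_eq_C_of_Dz_eq_zero {f : ℂ⸨X⸩} (hf : Dz f = 0) : ∃ c : ℂ, f = HahnSeries.C c := by
  refine ⟨f.coeff 0, ?_⟩
  ext n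
  rw [HahnSeries.C_apply, HahnSeries.coeff_single]
  split_ifs with hn
  · rw [hn]
  · have := congr_arg (HahnSeries.coeff · (n - 1)) hf
    simp only [Dz_coeff, sub_add_cancel, HahnSeries.coeff_zero, mul_eq_zero] at this
    exact this.resolve_left (by simpa using hn)

instance : CharZero ℂ⸨X⸩ := charZero_of_injective_algebraMap (algebraMap ℂ ℂ⸨X⸩).injective

lemma natCast_mul_mul_Dz_mul_pow_eq_zero {ξ a h : ℂ⸨X⸩} {k n : ℕ} (h₀ : k * (ξ * Dz a) = a * Dz ξ)
    (h₁ : k * (ξ * Dz (h * a ^ n)) = n * (h * a ^ n * Dz ξ)) :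
    k * ξ * Dz h * a ^ (n + 1) = 0 := by
  rw [Dz_mul] at h₁
  linear_combination a * h₁ - n * h * a ^ n * h₀ - k * ξ * h * mul_Dz_pow a n

section

-- Instance search finds this ring structure but not the structures derived from it (such as
-- `HasDistribNeg`), which `mul_sub` and `noncomm_ring` need.
local instance : Ring (End ℂ ℂ⸨X⸩) := inferInstance

lemma mz_apply (g f : ℂ⸨X⸩) : mz g f = g * f := rfl

lemma mz_zero : mz 0 = 0 := LinearMap.ext fun f ↦ zero_mul f

lemma mz_add (a b : ℂ⸨X⸩) : mz (a + b) = mz a + mz b := LinearMap.ext fun f ↦ add_mul a b f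

lemma mz_sub (a b : ℂ⸨X⸩) : mz (a - b) = mz a - mz b := LinearMap.ext fun f ↦ sub_mul a b f

lemma mz_neg (a : ℂ⸨X⸩) : mz (-a) = -mz a := LinearMap.ext fun f ↦ neg_mul a f

lemma mz_mul (a b : ℂ⸨X⸩) : mz (a * b) = mz a * mz b := LinearMap.ext fun f ↦ mul_assoc a b f

lemma mz_injective : Function.Injective mz := fun a b h ↦ by
  simpa [mz_apply] using LinearMap.congr_fun h 1

lemma mz_C (c : ℂ) : mz (HahnSeries.C c) = c • 1 :=
  LinearMap.ext fun _ ↦ HahnSeries.C_mul_eq_smul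

lemma Dz_mul_mz (g : ℂ⸨X⸩) : Dz * mz g = mz g * Dz + mz (Dz g) :=
  LinearMap.ext fun f ↦ by simp [mz_apply, Dz_mul, add_comm]

def diffOpLT (m : ℕ) : AddSubgroup (End ℂ ℂ⸨X⸩) where
  carrier := {P | DiffOrderLT P m}
  zero_mem' := ⟨0, by simp [mz_zero]⟩
  add_mem' := by
    rintro _ _ ⟨ξ, rfl⟩ ⟨η, rfl⟩
    exact ⟨ξ + η, by simp [mz_add, add_mul, Finset.sum_add_distrib]⟩
  neg_mem' := by
    rintro _ ⟨ξ, rfl⟩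
    exact ⟨-ξ, by simp [mz_neg, Finset.sum_neg_distrib]⟩

lemma mem_diffOpLT {P : End ℂ ℂ⸨X⸩} {m : ℕ} : P ∈ diffOpLT m ↔ DiffOrderLT P m := Iff.rfl

lemma diffOpLT_zero : diffOpLT 0 = ⊥ := by
  ext P
  simp [mem_diffOpLT, DiffOrderLT]

lemma mz_mul_Dz_pow_mem_diffOpLT (g : ℂ⸨X⸩) {j m : ℕ} (hj : j < m) :
    mz g * Dz ^ j ∈ diffOpLT m := by
  classical
  refine ⟨Pi.single j g, ?_⟩
  rw [Finset.sum_eq_single_of_mem j (Finset.mem_range.2 hj) fun i _ hi ↦ by simp [hi, mz_zero]]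
  simp

lemma diffOpLT_mono : Monotone diffOpLT := by
  intro m m' hm P ⟨ξ, hP⟩
  rw [hP]
  exact sum_mem fun j hj ↦
    mz_mul_Dz_pow_mem_diffOpLT _ (lt_of_lt_of_le (Finset.mem_range.1 hj) hm)

lemma exists_eq_mz_mul_Dz_pow_add {P : End ℂ ℂ⸨X⸩} {m : ℕ} (hP : P ∈ diffOpLT (m + 1)) :
    ∃ ξ : ℂ⸨X⸩, ∃ R ∈ diffOpLT m, P = mz ξ * Dz ^ m + R := by
  obtain ⟨ξ, rfl⟩ := hP
  exact ⟨ξ m, _, ⟨ξ, rfl⟩, by rw [Finset.sum_range_succ, add_comm]⟩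

lemma mz_mul_mem_diffOpLT (g : ℂ⸨X⸩) {P : End ℂ ℂ⸨X⸩} {m : ℕ} (hP : P ∈ diffOpLT m) :
    mz g * P ∈ diffOpLT m := by
  obtain ⟨ξ, rfl⟩ := hP
  exact ⟨fun j ↦ g * ξ j, by simp only [Finset.mul_sum, mz_mul, mul_assoc]⟩

lemma mul_Dz_pow_mem_diffOpLT (n : ℕ) {P : End ℂ ℂ⸨X⸩} {m : ℕ} (hP : P ∈ diffOpLT m) :
    P * Dz ^ n ∈ diffOpLT (m + n) := by
  obtain ⟨ξ, rfl⟩ := hP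
  rw [Finset.sum_mul]
  refine sum_mem fun j hj ↦ ?_
  rw [mul_assoc, ← pow_add]
  exact mz_mul_Dz_pow_mem_diffOpLT _ (by simp at hj; omega)

lemma Dz_mul_mem_diffOpLT {P : End ℂ ℂ⸨X⸩} {m : ℕ} (hP : P ∈ diffOpLT m) :
    Dz * P ∈ diffOpLT (m + 1) := by
  obtain ⟨ξ, rfl⟩ := hP
  rw [Finset.mul_sum]
  refine sum_mem fun j hj ↦ ?_
  have hj : j < m := Finset.mem_range.1 hj
  rw [← mul_assoc, Dz_mul_mz, add_mul, mul_assoc, ← pow_succ']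
  exact add_mem (mz_mul_Dz_pow_mem_diffOpLT _ (by omega))
    (mz_mul_Dz_pow_mem_diffOpLT _ (by omega))

lemma Dz_pow_succ_mul_mz_sub_mem_diffOpLT (m : ℕ) (g : ℂ⸨X⸩) :
    Dz ^ (m + 1) * mz g - mz g * Dz ^ (m + 1) - mz ((m + 1 : ℕ) * Dz g) * Dz ^ m ∈ diffOpLT m := by
  induction m with
  | zero => simp [Dz_mul_mz]
  | succ m ih =>
    have key : Dz ^ (m + 1 + 1) * mz g - mz g * Dz ^ (m + 1 + 1)
          - mz ((m + 1 + 1 : ℕ) * Dz g) * Dz ^ (m + 1)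
        = Dz * (Dz ^ (m + 1) * mz g - mz g * Dz ^ (m + 1) - mz ((m + 1 : ℕ) * Dz g) * Dz ^ m)
          + mz ((m + 1 : ℕ) * Dz (Dz g)) * Dz ^ m := by
      rw [mul_sub, mul_sub, ← mul_assoc Dz (mz g), ← mul_assoc Dz (mz _), Dz_mul_mz, Dz_mul_mz,
        Dz_natCast_mul, pow_succ' Dz (m + 1), pow_succ' Dz m]
      simp only [Nat.cast_add, Nat.cast_one, add_mul, one_mul, mz_add]
      noncomm_ring
    rw [key]
    exact add_mem (Dz_mul_mem_diffOpLT ih) (mz_mul_Dz_pow_mem_diffOpLT _ m.lt_succ_self)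

lemma mz_mul_Dz_pow_mul_sub_mem_diffOpLT (m n : ℕ) (f g : ℂ⸨X⸩) :
    mz f * Dz ^ m * (mz g * Dz ^ n) - mz (f * g) * Dz ^ (m + n)
      - mz (m * (f * Dz g)) * Dz ^ (m + n - 1) ∈ diffOpLT (m + n - 1) := by
  cases m with
  | zero => simp [mz_mul, mz_zero, mul_assoc]
  | succ m =>
    have key : mz f * Dz ^ (m + 1) * (mz g * Dz ^ n) - mz (f * g) * Dz ^ (m + 1 + n)
          - mz ((m + 1 : ℕ) * (f * Dz g)) * Dz ^ (m + n)
        = mz f * (Dz ^ (m + 1) * mz g - mz g * Dz ^ (m + 1) - mz ((m + 1 : ℕ) * Dz g) * Dz ^ m)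
          * Dz ^ n := by
      simp only [mul_sub, sub_mul, mz_mul, mul_assoc, pow_add, mul_left_comm _ f]
    rw [show m + 1 + n - 1 = m + n by omega, key]
    exact mul_Dz_pow_mem_diffOpLT n
      (mz_mul_mem_diffOpLT f (Dz_pow_succ_mul_mz_sub_mem_diffOpLT m g))

lemma lie_mz_mul_Dz_pow_sub_mem_diffOpLT (m n : ℕ) (f g : ℂ⸨X⸩) :
    ⁅mz f * Dz ^ m, mz g * Dz ^ n⁆ - mz (m * (f * Dz g) - n * (g * Dz f)) * Dz ^ (m + n - 1)
      ∈ diffOpLT (m + n - 1) := by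
  have h₂ := mz_mul_Dz_pow_mul_sub_mem_diffOpLT n m g f
  rw [add_comm n m, mul_comm g f] at h₂
  convert sub_mem (mz_mul_Dz_pow_mul_sub_mem_diffOpLT m n f g) h₂ using 1
  rw [Ring.lie_def, mz_sub, sub_mul]
  abel

lemma lie_mz_mul_Dz_pow_mem_diffOpLT (m n : ℕ) (f g : ℂ⸨X⸩) :
    ⁅mz f * Dz ^ m, mz g * Dz ^ n⁆ ∈ diffOpLT (m + n) := by
  rcases Nat.eq_zero_or_pos (m + n) with h | h
  · obtain ⟨rfl, rfl⟩ : m = 0 ∧ n = 0 := by omega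
    simp [Ring.lie_def, ← mz_mul, mul_comm]
  · simpa using add_mem
      (diffOpLT_mono (Nat.sub_le _ 1) (lie_mz_mul_Dz_pow_sub_mem_diffOpLT m n f g))
      (mz_mul_Dz_pow_mem_diffOpLT (m * (f * Dz g) - n * (g * Dz f)) (Nat.sub_lt h one_pos))

lemma lie_mem_diffOpLT {P Q : End ℂ ℂ⸨X⸩} {p q : ℕ} (hP : P ∈ diffOpLT p)
    (hQ : Q ∈ diffOpLT q) : ⁅P, Q⁆ ∈ diffOpLT (p + q - 2) := by
  obtain ⟨ξ, rfl⟩ := hP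
  obtain ⟨η, rfl⟩ := hQ
  rw [Ring.lie_def, Finset.sum_mul (Finset.range p), Finset.mul_sum (Finset.range p),
    ← Finset.sum_sub_distrib]
  refine sum_mem fun i hi ↦ ?_
  rw [Finset.mul_sum (Finset.range q), Finset.sum_mul (Finset.range q), ← Finset.sum_sub_distrib]
  refine sum_mem fun j hj ↦ ?_
  rw [← Ring.lie_def]
  exact diffOpLT_mono (by simp at hi hj; omega) (lie_mz_mul_Dz_pow_mem_diffOpLT i j _ _)

-- Bracketing with multiplication by `z` lowers the order by one and multiplies the symbol by
-- the order.
lemma eq_zero_of_mz_mul_Dz_pow_mem_diffOpLT {a : ℂ⸨X⸩} {m : ℕ}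
    (h : mz a * Dz ^ m ∈ diffOpLT m) : a = 0 := by
  induction m generalizing a with
  | zero =>
    rw [diffOpLT_zero, AddSubgroup.mem_bot, pow_zero, mul_one, ← mz_zero] at h
    exact mz_injective h
  | succ m ih =>
    have hz := mz_mul_Dz_pow_mem_diffOpLT (HahnSeries.single 1 1) zero_lt_one
    have hlie := lie_mem_diffOpLT h hz
    have hsymb := lie_mz_mul_Dz_pow_sub_mem_diffOpLT (m + 1) 0 a (HahnSeries.single 1 1)
    rw [show m + 1 + 1 - 2 = m by omega] at hlie
    rw [show m + 1 + 0 - 1 = m by omega] at hsymb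
    have := ih (by simpa [Dz_single_one_one] using sub_mem hlie hsymb)
    exact (mul_eq_zero.1 this).resolve_left (Nat.cast_add_one_ne_zero m)

lemma symbol_eq_of_lie_eq_zero {R Q : End ℂ ℂ⸨X⸩} {ξ a : ℂ⸨X⸩} {k p : ℕ}
    (hR : R ∈ diffOpLT k) (hQ : Q ∈ diffOpLT p)
    (h : ⁅mz ξ * Dz ^ k + R, mz a * Dz ^ p + Q⁆ = 0) : k * (ξ * Dz a) = p * (a * Dz ξ) := by
  have hξ := mz_mul_Dz_pow_mem_diffOpLT ξ k.lt_succ_self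
  have ha := mz_mul_Dz_pow_mem_diffOpLT a p.lt_succ_self
  have hlower : ⁅mz ξ * Dz ^ k + R, mz a * Dz ^ p + Q⁆ - ⁅mz ξ * Dz ^ k, mz a * Dz ^ p⁆
      ∈ diffOpLT (k + p - 1) := by
    have e : ⁅mz ξ * Dz ^ k + R, mz a * Dz ^ p + Q⁆ - ⁅mz ξ * Dz ^ k, mz a * Dz ^ p⁆
        = ⁅mz ξ * Dz ^ k, Q⁆ + ⁅R, mz a * Dz ^ p⁆ + ⁅R, Q⁆ := by
      simp only [Ring.lie_def]
      noncomm_ring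
    rw [e]
    refine add_mem (add_mem ?_ ?_) ?_
    · simpa [show k + 1 + p - 2 = k + p - 1 by omega] using lie_mem_diffOpLT hξ hQ
    · simpa [show k + (p + 1) - 2 = k + p - 1 by omega] using lie_mem_diffOpLT hR ha
    · exact diffOpLT_mono (by omega) (lie_mem_diffOpLT hR hQ)
  have hsymb := lie_mz_mul_Dz_pow_sub_mem_diffOpLT k p ξ a
  refine sub_eq_zero.1 (eq_zero_of_mz_mul_Dz_pow_mem_diffOpLT (m := k + p - 1) ?_)
  convert neg_mem (add_mem hlower hsymb) using 1
  rw [h]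
  abel

theorem exists_eq_smul_one_of_lie_eq_zero {R₀ R₁ D : End ℂ ℂ⸨X⸩} {a h : ℂ⸨X⸩} {n k : ℕ}
    (ha : a ≠ 0) (hh : Dz h ≠ 0) (hR₀ : R₀ ∈ diffOpLT 1) (hR₁ : R₁ ∈ diffOpLT n)
    (hD : D ∈ diffOpLT (k + 1)) (h₀ : ⁅D, mz a * Dz + R₀⁆ = 0)
    (h₁ : ⁅D, mz (h * a ^ n) * Dz ^ n + R₁⁆ = 0) : ∃ c : ℂ, D = c • 1 := by
  rw [← pow_one Dz] at h₀
  induction k generalizing D with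
  | zero =>
    obtain ⟨ξ, R, hR, rfl⟩ := exists_eq_mz_mul_Dz_pow_add hD
    obtain ⟨c, rfl⟩ := exists_eq_C_of_Dz_eq_zero <| (mul_eq_zero.1 <| by
      simpa using (symbol_eq_of_lie_eq_zero hR hR₀ h₀).symm).resolve_left ha
    rw [diffOpLT_zero, AddSubgroup.mem_bot] at hR
    exact ⟨c, by rw [hR, pow_zero, mul_one, add_zero, mz_C]⟩
  | succ k ih =>
    obtain ⟨ξ, R, hR, rfl⟩ := exists_eq_mz_mul_Dz_pow_add hD
    have hξ : ξ = 0 := by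
      simpa [ha, hh, Nat.cast_add_one_ne_zero] using
        natCast_mul_mul_Dz_mul_pow_eq_zero (by simpa using symbol_eq_of_lie_eq_zero hR hR₀ h₀)
          (symbol_eq_of_lie_eq_zero hR hR₁ h₁)
    rw [hξ, mz_zero, zero_mul, zero_add] at h₀ h₁ ⊢
    exact ih hR h₀ h₁

end

theorem commutant_is_constant_general
    (S : Set ℤ) (h0S : (0 : ℤ) ∈ S) (h1S : (1 : ℤ) ∈ S)
    (ρ : ℤ → Module.End ℂ (LaurentSeries ℂ))
    (n : ℤ → ℕ) (hn0 : n 0 = 1)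
    (h : LaurentSeries ℂ) (hder : Dz h ≠ 0)
    (hsym : ∀ i ∈ S, ∃ R : Module.End ℂ (LaurentSeries ℂ), DiffOrderLT R (n i) ∧
      ρ i = mz (h ^ (i + (n i : ℤ)) * (-(Dz h)) ^ (-(n i : ℤ))) * Dz ^ (n i) + R)
    (D : Module.End ℂ (LaurentSeries ℂ))
    (hDdiff : ∃ k : ℕ, DiffOrderLE D k)
    (hcomm : ∀ i ∈ S, ⁅D, ρ i⁆ = 0) :
    ∃ κ : ℂ, D = κ • (1 : Module.End ℂ (LaurentSeries ℂ)) := by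
  obtain ⟨R₀, hR₀, hρ₀⟩ := hsym 0 h0S
  obtain ⟨R₁, hR₁, hρ₁⟩ := hsym 1 h1S
  obtain ⟨k, hk⟩ := hDdiff
  have hh : h ≠ 0 := by
    rintro rfl
    exact hder (map_zero Dz)
  have hsymb₀ : h ^ (0 + (n 0 : ℤ)) * (-Dz h) ^ (-(n 0 : ℤ)) = h * (-Dz h)⁻¹ := by
    simp [hn0]
  have hsymb₁ : h ^ (1 + (n 1 : ℤ)) * (-Dz h) ^ (-(n 1 : ℤ)) = h * (h * (-Dz h)⁻¹) ^ n 1 := by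
    rw [zpow_add₀ hh, zpow_one, zpow_neg, zpow_natCast, zpow_natCast, mul_pow, inv_pow, mul_assoc]
  have h₀ := hcomm 0 h0S
  have h₁ := hcomm 1 h1S
  rw [hρ₀, hsymb₀, hn0, pow_one] at h₀
  rw [hρ₁, hsymb₁] at h₁
  exact exists_eq_smul_one_of_lie_eq_zero (mul_ne_zero hh (inv_ne_zero (neg_ne_zero.2 hder)))
    hder (hn0 ▸ hR₀) hR₁ hk h₀ h₁

/-- Let `ρ : g → Diff(ℂ((z)))` be an injective representation, where `g` has support `S ∋ 0, 1`
and bracket `[L i, L j] = (i−j) L (i+j)`, with `ord(ρ(L 0)) = 1`, and whose symbols satisfy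
`a_i = h^{i+n_i} (−h′)^{−n_i}` for some `h` with `h′ ≠ 0`.  If `D ∈ Diff(ℂ((z)))` commutes with
every `ρ(L i)`, then `D` is a constant (an element of `ℂ ⊂ Diff⁰`). -/
theorem commutant_is_constant
    (S : Set ℤ) (h0S : (0 : ℤ) ∈ S) (h1S : (1 : ℤ) ∈ S)
    (ρ : ℤ → Module.End ℂ (LaurentSeries ℂ))
    (n : ℤ → ℕ) (hn0 : n 0 = 1)
    (h : LaurentSeries ℂ) (hder : Dz h ≠ 0)
    (horder : ∀ i ∈ S, HasOrder (ρ i) (n i))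
    (hsym : ∀ i ∈ S, ∃ R : Module.End ℂ (LaurentSeries ℂ), DiffOrderLT R (n i) ∧
      ρ i = mz (h ^ (i + (n i : ℤ)) * (-(Dz h)) ^ (-(n i : ℤ))) * Dz ^ (n i) + R)
    (hrel : ∀ i j : ℤ, i ∈ S → j ∈ S → i ≠ j → i + j ∈ S →
      ⁅ρ i, ρ j⁆ = (((i : ℂ) - (j : ℂ))) • ρ (i + j))
    (hinj : ∀ c : ℤ →₀ ℂ, (∀ i ∈ c.support, i ∈ S) →
      (c.sum fun i a => a • ρ i) = 0 → c = 0)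
    (D : Module.End ℂ (LaurentSeries ℂ))
    (hDdiff : ∃ k : ℕ, DiffOrderLE D k)
    (hcomm : ∀ i ∈ S, ⁅D, ρ i⁆ = 0) :
    ∃ κ : ℂ, D = κ • (1 : Module.End ℂ (LaurentSeries ℂ)) :=
  commutant_is_constant_general S h0S h1S ρ n hn0 h hder hsym D hDdiff hcomm
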